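/- arXiv:1705.01492 — 8 statements merged into one kernel-verified Lean document; each statement's English description precedes it below -/
import Mathlib

section
/- Let G be a group with a finite normal subgroup H such that the quotient group G/H is a finitely generated abelian group. Then there exists a finite symmetric generating set A of G such that the geodesic language Geo(G,A) is piecewise excluding. -/
/-- `w` is a word over the alphabet `A`: every letter of `w` lies in `A`. -/
def IsWordOver {G : Type*} (A : Finset G) (w : List G) : Prop :=
  ∀ x ∈ w, x ∈ A

/-- `A` is a finite symmetric (inverse-closed) generating set of the group `G`. -/
def IsSymmGen {G : Type*} [Group G] (A : Finset G) : Prop :=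
  Subgroup.closure (A : Set G) = ⊤ ∧ ∀ a ∈ A, a⁻¹ ∈ A

/-- `w` is a geodesic word over `A`: no word over `A` of strictly smaller length
evaluates to the same element of `G`. -/
def IsGeodesic {G : Type*} [Group G] (A : Finset G) (w : List G) : Prop :=
  IsWordOver A w ∧
    ∀ v : List G, IsWordOver A v → v.prod = w.prod → w.length ≤ v.length

/-- The geodesic language of `G` over `A`. -/
def Geo {G : Type*} [Group G] (A : Finset G) : Set (List G) :=
  {w | IsGeodesic A w}

/-- A language `L` of words over `A` is piecewise excluding if there is a finite set `F`
of words over `A` such that a word `w` over `A` lies in `L` iff no element of `F` is a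
piecewise subword (i.e. a not-necessarily-contiguous subsequence) of `w`. -/
def PiecewiseExcluding {G : Type*} (A : Finset G) (L : Set (List G)) : Prop :=
  ∃ F : Finset (List G), (∀ u ∈ F, IsWordOver A u) ∧
    ∀ w : List G, IsWordOver A w → (w ∈ L ↔ ∀ u ∈ F, ¬ List.Sublist u w)

/-!
In an abelian group a subword of a geodesic is again geodesic: if `u` is obtained from `w` by
deleting the letters `t`, then `w` is a rearrangement of `u t`, so a shorter word for `u` followed
by `t` would be a shorter word for `w`. A subword-closed language over a finite alphabet is
piecewise excluding, the excluded words being its minimal non-members, of which there are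
finitely many by Higman's lemma.

For `G` with finite normal subgroup `H` and abelian quotient `π : G → G/H`, choose a symmetric
generating set `B ∌ 1` of `G/H` and let `A = π⁻¹ B ∪ (H \ {1})`. A geodesic over `A` of length at
least two contains no letter of `H` (it could be shortened by lifting the projected word) and
projects to a geodesic over `B`; conversely a word whose projection is geodesic is geodesic. So
subword-closedness of the geodesics passes from `G/H` to `G`.
-/

open scoped List Pointwise

theorem List.sublist_of_sublistForall₂_eq {α : Type*} {u w : List α}
    (h : SublistForall₂ (· = ·) u w) : u <+ w := by
  obtain ⟨l, hul, hlw⟩ := sublistForall₂_iff.1 h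
  rw [forall₂_eq_eq_eq] at hul
  exact hul ▸ hlw

theorem List.exists_minimal_sublist {α : Type*} {S : Set (List α)} {w : List α} (hw : w ∈ S) :
    ∃ m ∈ S, m <+ w ∧ ∀ u ∈ S, u <+ m → u = m := by
  obtain ⟨m, ⟨hmS, hmw⟩, hmin⟩ :=
    (measure List.length).wf.has_min {u | u ∈ S ∧ u <+ w} ⟨w, hw, .refl w⟩
  exact ⟨m, hmS, hmw, fun u huS hum =>
    hum.eq_of_length_le (not_lt.mp (hmin u ⟨huS, hum.trans hmw⟩))⟩

section Words

variable {α : Type*} {A : Finset α}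

theorem IsWordOver.sublist {w u : List α} (hw : IsWordOver A w) (h : u <+ w) :
    IsWordOver A u :=
  fun x hx => hw x (h.subset hx)

theorem isWordOver_partiallyWellOrderedOn_sublist (A : Finset α) :
    {w : List α | IsWordOver A w}.PartiallyWellOrderedOn (· <+ ·) := fun f =>
  have ⟨m, n, hmn, h⟩ := Set.PartiallyWellOrderedOn.partiallyWellOrderedOn_sublistForall₂
    (· = ·) A.finite_toSet.partiallyWellOrderedOn f
  ⟨m, n, hmn, List.sublist_of_sublistForall₂_eq h⟩

theorem piecewiseExcluding_of_sublist_closed (A : Finset α) (L : Set (List α))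
    (hL : ∀ ⦃w u⦄, IsWordOver A w → w ∈ L → u <+ w → u ∈ L) :
    PiecewiseExcluding A L := by
  set S := {w | IsWordOver A w ∧ w ∉ L}
  set M := {m | m ∈ S ∧ ∀ u ∈ S, u <+ m → u = m}
  have hM : M.Finite := by
    refine IsAntichain.finite_of_partiallyWellOrderedOn ?_
      ((isWordOver_partiallyWellOrderedOn_sublist A).mono fun m hm => hm.1.1)
    exact fun u hu m hm hne hum => hne (hm.2 u hu.1 hum)
  refine ⟨hM.toFinset, fun m hm => (hM.mem_toFinset.mp hm).1.1, fun w hw => ⟨?_, ?_⟩⟩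
  · intro hwL m hm hmw
    exact (hM.mem_toFinset.mp hm).1.2 (hL hw hwL hmw)
  · intro hF
    by_contra hwL
    obtain ⟨m, hmS, hmw, hmin⟩ := List.exists_minimal_sublist (S := S) ⟨hw, hwL⟩
    exact hF m (hM.mem_toFinset.mpr ⟨hmS, hmin⟩) hmw

end Words

section Geodesics

variable {G : Type*} [Group G] {A : Finset G}

theorem isGeodesic_of_length_le_one (hA : (1 : G) ∉ A) {u : List G} (hu : IsWordOver A u)
    (hlen : u.length ≤ 1) : IsGeodesic A u := by
  refine ⟨hu, fun v _ hvu => ?_⟩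
  rcases u with _ | ⟨a, _ | _⟩
  · exact Nat.zero_le _
  · rcases v with _ | _
    · exact absurd (by simpa using hvu.symm) (ne_of_mem_of_not_mem (hu a (.head _)) hA)
    · simp
  · simp at hlen

theorem IsGeodesic.sublist_of_comm {Q : Type*} [CommGroup Q] {B : Finset Q} {w u : List Q}
    (hw : IsGeodesic B w) (hu : u <+ w) : IsGeodesic B u := by
  obtain ⟨t, hwt⟩ := hu.exists_perm_append
  refine ⟨hw.1.sublist hu, fun v hv hvu => ?_⟩
  have hvt : IsWordOver B (v ++ t) := by
    simpa [IsWordOver, or_imp, forall_and] using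
      ⟨hv, fun x hx => hw.1 x (hwt.symm.subset (List.mem_append_right u hx))⟩
  have := hw.2 (v ++ t) hvt (by rw [hwt.prod_eq, List.prod_append, List.prod_append, hvu])
  simp only [hwt.length_eq, List.length_append] at this
  omega

end Geodesics

section Lifting

variable {G Q : Type*} [Group G] [Group Q] {π : G →* Q} {A : Finset G} {B : Finset Q}

theorem Group.FG.exists_isSymmGen_one_notMem (hQ : Group.FG Q) :
    ∃ B : Finset Q, IsSymmGen B ∧ (1 : Q) ∉ B := by
  classical
  obtain ⟨S, hS⟩ := hQ.out
  refine ⟨(S ∪ S⁻¹).erase 1, ⟨?_, fun a ha => ?_⟩, Finset.notMem_erase 1 _⟩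
  · rw [Finset.coe_erase, Subgroup.closure_sdiff_one, Finset.coe_union, Finset.coe_inv,
      Subgroup.closure_union, Subgroup.closure_inv, sup_idem, hS]
  · simp only [Finset.mem_erase, Finset.mem_union, Finset.mem_inv', inv_inv] at ha ⊢
    exact ⟨inv_ne_one.mpr ha.1, ha.2.symm⟩

theorem exists_finset_mem_iff_of_finite_ker (hπ : Function.Surjective π) [Finite π.ker]
    (B : Finset Q) : ∃ A : Finset G, ∀ a, a ∈ A ↔ π a ∈ B ∨ (π a = 1 ∧ a ≠ 1) := by
  have hfin : (π ⁻¹' (insert 1 B : Set Q)).Finite :=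
    (B.finite_toSet.insert 1).preimage' fun q _ =>
      Set.finite_coe_iff.mp (.of_equiv _ (π.fiberEquivKerOfSurjective hπ q).symm)
  refine ⟨(hfin.subset (t := {a | π a ∈ B ∨ (π a = 1 ∧ a ≠ 1)}) ?_).toFinset, by simp⟩
  rintro a (ha | ha) <;> simp [ha]

variable (hA : ∀ a, a ∈ A ↔ π a ∈ B ∨ (π a = 1 ∧ a ≠ 1))
include hA

theorem isSymmGen_of_mem_iff (hπ : Function.Surjective π) (hB : IsSymmGen B) : IsSymmGen A := by
  have hker : π.ker ≤ Subgroup.closure (A : Set G) := by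
    intro a ha
    by_cases h1 : a = 1
    · exact h1 ▸ Subgroup.one_mem _
    · exact Subgroup.subset_closure ((hA a).mpr (.inr ⟨ha, h1⟩))
  have hmap : (Subgroup.closure (A : Set G)).map π = ⊤ := by
    rw [MonoidHom.map_closure, eq_top_iff, ← hB.1]
    refine Subgroup.closure_mono fun q hq => ?_
    obtain ⟨a, rfl⟩ := hπ q
    exact ⟨a, (hA a).mpr (.inl hq), rfl⟩
  refine ⟨?_, fun a ha => (hA _).mpr ?_⟩
  · rw [← sup_eq_left.mpr hker, ← Subgroup.comap_map_eq, hmap, Subgroup.comap_top]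
  · rcases (hA a).mp ha with h | h
    · exact .inl (by simpa using hB.2 _ h)
    · exact .inr (by simpa using h)

theorem exists_isWordOver_lift (hπ : Function.Surjective π) :
    ∀ {s : List Q} {g : G}, s ≠ [] → IsWordOver B s → s.prod = π g →
      ∃ t : List G, IsWordOver A t ∧ t.prod = g ∧ t.length = s.length
  | [q], g, _, hs, hsg => by
    refine ⟨[g], fun y hy => (hA y).mpr (.inl ?_), by simp, rfl⟩
    simpa [List.mem_singleton.mp hy, ← hsg] using hs q (.head _)
  | q :: r :: s, g, _, hs, hsg => by
    obtain ⟨x, rfl⟩ := hπ q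
    obtain ⟨t, ht, htg, htl⟩ := exists_isWordOver_lift hπ (s := r :: s) (g := x⁻¹ * g)
      (List.cons_ne_nil _ _) (fun y hy => hs y (.tail _ hy))
      (by simp [← hsg])
    refine ⟨x :: t, fun y hy => ?_, by simp [htg], by simp [htl]⟩
    rcases List.mem_cons.mp hy with rfl | hy
    · exact (hA y).mpr (.inl (hs _ (.head _)))
    · exact ht y hy

/-- Project a word to `Q` and delete the letters that become trivial. -/
theorem exists_isWordOver_project {v : List G} (hv : IsWordOver A v) :
    ∃ s : List Q, IsWordOver B s ∧ s.prod = π v.prod ∧ s.length ≤ v.length ∧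
      ∀ a ∈ v, π a = 1 → s.length < v.length := by
  classical
  refine ⟨(v.map π).filter (· != 1), fun q hq => ?_, ?_, ?_, fun a ha h1 => ?_⟩
  · obtain ⟨hq, hq1⟩ := List.mem_filter.mp hq
    obtain ⟨a, ha, rfl⟩ := List.mem_map.mp hq
    exact ((hA a).mp (hv a ha)).resolve_right fun h => by simp [h.1] at hq1
  · rw [List.prod_filter_bne_one, map_list_prod]
  · exact (List.length_filter_le _ _).trans_eq (List.length_map _)
  · rw [← List.length_map (f := π)]
    exact List.length_filter_lt_length_iff_exists.mpr ⟨π a, List.mem_map_of_mem ha, by simp [h1]⟩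

theorem IsGeodesic.of_map {u : List G} (hu : IsWordOver A u) (h : IsGeodesic B (u.map π)) :
    IsGeodesic A u := by
  refine ⟨hu, fun v hv hvu => ?_⟩
  obtain ⟨s, hs, hsv, hlen, -⟩ := exists_isWordOver_project hA hv
  have := h.2 s hs (by rw [hsv, hvu, map_list_prod])
  rw [List.length_map] at this
  omega

theorem IsGeodesic.map_of_two_le_length (hπ : Function.Surjective π) {w : List G}
    (hw : IsGeodesic A w) (h2 : 2 ≤ w.length) : IsGeodesic B (w.map π) := by
  -- otherwise `w.prod` would be `1` or a single letter from `ker π`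
  have hne : π w.prod ≠ 1 := by
    intro h1
    by_cases h : w.prod = 1
    · have := hw.2 [] (by simp [IsWordOver]) (by simp [h])
      simp only [List.length_nil] at this
      omega
    · have := hw.2 [w.prod] (by simpa [IsWordOver] using (hA _).mpr (.inr ⟨h1, h⟩)) (by simp)
      simp only [List.length_singleton] at this
      omega
  have hshort : ∀ s, IsWordOver B s → s.prod = π w.prod → w.length ≤ s.length := by
    intro s hs hsw
    have hs0 : s ≠ [] := by rintro rfl; exact hne hsw.symm
    obtain ⟨t, ht, htw, htl⟩ := exists_isWordOver_lift hA hπ hs0 hs hsw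
    exact htl ▸ hw.2 t ht htw
  have hletters : ∀ a ∈ w, π a ∈ B := by
    intro a ha
    by_contra haB
    have h1 : π a = 1 := (((hA a).mp (hw.1 a ha)).resolve_left haB).1
    obtain ⟨s, hs, hsw, -, hlt⟩ := exists_isWordOver_project hA hw.1
    exact (hshort s hs hsw).not_gt (hlt a ha h1)
  refine ⟨fun q hq => ?_, fun v hv hvw => ?_⟩
  · obtain ⟨a, ha, rfl⟩ := List.mem_map.mp hq
    exact hletters a ha
  · rw [List.length_map]
    exact hshort v hv (by rw [hvw, map_list_prod])

theorem IsGeodesic.sublist_of_lift (hπ : Function.Surjective π) (hB1 : (1 : Q) ∉ B)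
    (hB : ∀ ⦃w u : List Q⦄, IsGeodesic B w → u <+ w → IsGeodesic B u)
    {w u : List G} (hw : IsGeodesic A w) (hu : u <+ w) : IsGeodesic A u := by
  by_cases hlen : u.length ≤ 1
  · exact isGeodesic_of_length_le_one (by simpa [hA] using hB1) (hw.1.sublist hu) hlen
  · exact .of_map hA (hw.1.sublist hu) (hB (hw.map_of_two_le_length hA hπ (by
      have := hu.length_le; omega)) (hu.map π))

end Lifting

/-- Finite-by-abelian groups have piecewise excluding geodesic language for some
finite symmetric generating set. -/
theorem finite_by_abelian_piecewise_excluding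
    {G : Type*} [Group G] (H : Subgroup G) [H.Normal] [Finite H]
    (hfg : Group.FG (G ⧸ H)) (hab : ∀ x y : G ⧸ H, x * y = y * x) :
    ∃ A : Finset G, IsSymmGen A ∧ PiecewiseExcluding A (Geo A) := by
  let _ : CommGroup (G ⧸ H) := { mul_comm := hab }
  have hπ := QuotientGroup.mk'_surjective H
  have : Finite (QuotientGroup.mk' H).ker := by rwa [QuotientGroup.ker_mk']
  obtain ⟨B, hB, hB1⟩ := hfg.exists_isSymmGen_one_notMem
  obtain ⟨A, hA⟩ := exists_finset_mem_iff_of_finite_ker hπ B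
  refine ⟨A, isSymmGen_of_mem_iff hA hπ hB, piecewiseExcluding_of_sublist_closed A _ ?_⟩
  exact fun _ _ _ hw hu => hw.sublist_of_lift hA hπ hB1 (fun _ _ => IsGeodesic.sublist_of_comm) hu
end

section
/- Let Q8 denote the quaternion group of order 8 (QuaternionGroup 2 in Mathlib). For every finite symmetric generating set A of Q8, every word over A of length at least three is not geodesic; equivalently, every geodesic word over A has length at most two. -/
open Pointwise

def S2 (A : Finset (QuaternionGroup 2)) : Finset (QuaternionGroup 2) :=
  insert 1 (A ∪ A * A)

set_option maxRecDepth 10000 in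
theorem key : ∀ A : Finset (QuaternionGroup 2), (∀ a ∈ A, a⁻¹ ∈ A) →
    ∀ s ∈ S2 A, ∀ a ∈ A, s * a ∈ S2 A := by decide

theorem words_mem {A : Finset (QuaternionGroup 2)} (hinv : ∀ a ∈ A, a⁻¹ ∈ A)
    (w : List (QuaternionGroup 2)) (hw : ∀ x ∈ w, x ∈ A) : w.prod ∈ S2 A := by
  induction w using List.reverseRecOn with
  | nil => simp [S2]
  | append_singleton l a ih =>
      rw [List.prod_append, List.prod_singleton]
      exact key A hinv _ (ih fun x hx => hw x (by simp [hx]))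
        a (hw a (by simp))

theorem short_word {A : Finset (QuaternionGroup 2)} (hA : Subgroup.closure (A : Set (QuaternionGroup 2)) = ⊤ ∧ ∀ a ∈ A, a⁻¹ ∈ A)
    (g : QuaternionGroup 2) :
    ∃ v : List (QuaternionGroup 2), (∀ x ∈ v, x ∈ A) ∧ v.length ≤ 2 ∧ v.prod = g := by
  obtain ⟨hgen, hinv⟩ := hA
  -- g is in the submonoid closure of A
  have hsub : g ∈ Submonoid.closure (A : Set (QuaternionGroup 2)) := by
    have h1 : g ∈ Subgroup.closure (A : Set (QuaternionGroup 2)) := by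
      rw [hgen]; trivial
    rw [← Subgroup.mem_toSubmonoid, Subgroup.closure_toSubmonoid] at h1
    have : (A : Set (QuaternionGroup 2)) ∪ (A : Set (QuaternionGroup 2))⁻¹ =
        (A : Set (QuaternionGroup 2)) := by
      apply Set.union_eq_self_of_subset_right
      intro x hx
      simp only [Set.mem_inv, Finset.mem_coe] at hx ⊢
      have := hinv x⁻¹ hx
      simpa using this
    rwa [this] at h1
  obtain ⟨l, hl, hlp⟩ := Submonoid.exists_list_of_mem_closure hsub
  have hmem : g ∈ S2 A := by
    rw [← hlp]; exact words_mem hinv l hl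
  simp only [S2, Finset.mem_insert, Finset.mem_union, Finset.mem_mul] at hmem
  rcases hmem with h | h | ⟨a, ha, b, hb, hab⟩
  · exact ⟨[], by simp, by simp, by simp [h]⟩
  · exact ⟨[g], by simpa using h, by simp, by simp⟩
  · exact ⟨[a, b], by intro x hx; rcases List.mem_pair.mp hx with rfl | rfl <;> assumption, by simp, by simp [hab]⟩

/-- For any finite symmetric generating set `A` of the quaternion group `Q₈`,
every word over `A` of length at least three is not geodesic. -/
theorem quaternion_geodesics_length_le_two
    (A : Finset (QuaternionGroup 2)) (hA : IsSymmGen A) :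
    (∀ w : List (QuaternionGroup 2), IsWordOver A w → 3 ≤ w.length → ¬ IsGeodesic A w) ∧
    (∀ w : List (QuaternionGroup 2), IsGeodesic A w → w.length ≤ 2) := by
  have main : ∀ w : List (QuaternionGroup 2), IsGeodesic A w → w.length ≤ 2 := by
    intro w hw
    obtain ⟨v, hv, hvlen, hvprod⟩ := short_word hA w.prod
    exact le_trans (hw.2 v hv hvprod) hvlen
  refine ⟨fun w _ h3 hg => ?_, main⟩
  have := main w hg
  omega
end

section
/- Let Q8 denote the quaternion group of order 8 (QuaternionGroup 2 in Mathlib). There exists a finite symmetric generating set A of the direct product Q8 × Q8 such that the geodesic language Geo(Q8 × Q8, A) is not piecewise excluding. In particular, the class of groups having piecewise excluding geodesic language for all finite symmetric generating sets is not closed under direct products. -/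
/-! In `Q₈` a symmetric generating set contains two non-commuting elements `x, y`, and then every
element of `Q₈` is one of `1, x, x⁻¹, y, y⁻¹, x², xy, yx`. So geodesics have length at most two;
a subsequence of such a word is a factor, hence again geodesic, and a subsequence-closed
language of bounded word length is piecewise excluding: exclude the words outside it of length
at most one more than the bound. Conversely, a piecewise excluding language is closed under
subsequences, and this fails for a suitable generating set of `Q₈ × Q₈`. -/

open scoped Pointwise List

theorem List.Sublist.isInfix_of_length_le_two {α : Type*} {u w : List α} (huw : u <+ w)
    (hw : w.length ≤ 2) : u <:+: w := by
  by_cases hlen : w.length ≤ u.length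
  · rw [huw.eq_of_length_le hlen]
  have hu : u.length ≤ 1 := by omega
  match u, hu with
  | [], _ => exact List.nil_infix
  | [x], _ => exact (List.singleton_infix_iff x w).2 (huw.subset (List.mem_singleton_self x))

section Words

variable {G : Type*} {A : Finset G} {u w : List G}

theorem isWordOver_append {v : List G} :
    IsWordOver A (u ++ v) ↔ IsWordOver A u ∧ IsWordOver A v := by
  simp only [IsWordOver, List.mem_append, or_imp, forall_and]

theorem IsWordOver.of_sublist (hw : IsWordOver A w) (huw : u <+ w) : IsWordOver A u :=
  fun x hx => hw x (huw.subset hx)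

theorem finite_setOf_isWordOver_length_le (A : Finset G) (n : ℕ) :
    {w : List G | IsWordOver A w ∧ w.length ≤ n}.Finite := by
  refine ((List.finite_length_le A n).image (List.map Subtype.val)).subset ?_
  rintro w ⟨hw, hlen⟩
  lift w to List A using hw
  exact ⟨w, by simpa using hlen, rfl⟩

theorem PiecewiseExcluding.mem_of_sublist {L : Set (List G)} (hL : PiecewiseExcluding A L)
    (hw : IsWordOver A w) (hwL : w ∈ L) (huw : u <+ w) : u ∈ L := by
  obtain ⟨F, -, hF⟩ := hL
  exact (hF u (hw.of_sublist huw)).2 fun f hf hfu => (hF w hw).1 hwL f hf (hfu.trans huw)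

theorem piecewiseExcluding_of_sublist_closed_s6 {L : Set (List G)} (N : ℕ)
    (hlen : ∀ w ∈ L, w.length ≤ N) (hsub : ∀ w ∈ L, ∀ u, u <+ w → u ∈ L) :
    PiecewiseExcluding A L := by
  classical
  refine ⟨(finite_setOf_isWordOver_length_le A (N + 1)).toFinset.filter (· ∉ L),
    fun u hu => ?_, fun w hw => ⟨fun hwL f hf hfw => ?_, fun hF => ?_⟩⟩
  · simp only [Finset.mem_filter, Set.Finite.mem_toFinset, Set.mem_ofPred_eq] at hu
    exact hu.1.1
  · exact (Finset.mem_filter.1 hf).2 (hsub w hwL f hfw)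
  · by_contra hwL
    have hprefix : w.take (N + 1) ∉ L := by
      intro hL
      rcases le_or_gt w.length (N + 1) with hle | hgt
      · exact hwL (by rwa [List.take_of_length_le hle] at hL)
      · have := hlen _ hL
        rw [List.length_take] at this
        omega
    refine hF (w.take (N + 1)) ?_ (List.take_sublist _ _)
    simp only [Finset.mem_filter, Set.Finite.mem_toFinset, Set.mem_ofPred_eq]
    exact ⟨⟨hw.of_sublist (List.take_sublist _ _), List.length_take_le _ _⟩, hprefix⟩

end Words

section Geodesics

variable {G : Type*} [Group G] {A : Finset G} {u w : List G}

theorem IsGeodesic.of_isInfix (hw : IsGeodesic A w) (huw : u <:+: w) : IsGeodesic A u := by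
  obtain ⟨s, t, rfl⟩ := huw
  obtain ⟨hst, ht⟩ := isWordOver_append.1 hw.1
  obtain ⟨hs, hu⟩ := isWordOver_append.1 hst
  refine ⟨hu, fun v hv hvu => ?_⟩
  have := hw.2 (s ++ v ++ t) (isWordOver_append.2 ⟨isWordOver_append.2 ⟨hs, hv⟩, ht⟩)
    (by simp only [List.prod_append, hvu])
  simp only [List.length_append] at this
  omega

theorem IsGeodesic.length_le {n : ℕ}
    (hA : ∀ g : G, ∃ v, IsWordOver A v ∧ v.length ≤ n ∧ v.prod = g) (hw : IsGeodesic A w) :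
    w.length ≤ n := by
  obtain ⟨v, hv, hvn, hvw⟩ := hA w.prod
  exact (hw.2 v hv hvw).trans hvn

theorem piecewiseExcluding_geo_of_forall_exists_word_length_le_two
    (hA : ∀ g : G, ∃ v, IsWordOver A v ∧ v.length ≤ 2 ∧ v.prod = g) :
    PiecewiseExcluding A (Geo A) :=
  piecewiseExcluding_of_sublist_closed_s6 2 (fun _ hw => hw.length_le hA)
    fun _ hw _ huw => IsGeodesic.of_isInfix hw (huw.isInfix_of_length_le_two (hw.length_le hA))

end Geodesics

section Ball

variable {G : Type*} [Group G] [DecidableEq G] {A : Finset G}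

instance (A : Finset G) (w : List G) : Decidable (IsWordOver A w) :=
  inferInstanceAs (Decidable (∀ x ∈ w, x ∈ A))

def ball (A : Finset G) : ℕ → Finset G
  | 0 => {1}
  | n + 1 => ball A n ∪ A * ball A n

theorem mem_ball {n : ℕ} {g : G} :
    g ∈ ball A n ↔ ∃ w, IsWordOver A w ∧ w.length ≤ n ∧ w.prod = g := by
  induction n generalizing g with
  | zero =>
    simp only [ball, Finset.mem_singleton, Nat.le_zero, List.length_eq_zero_iff]
    constructor
    · rintro rfl
      exact ⟨[], List.forall_mem_nil _, rfl, rfl⟩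
    · rintro ⟨w, -, rfl, rfl⟩
      rfl
  | succ n ih =>
    simp only [ball, Finset.mem_union, Finset.mem_mul, ih]
    constructor
    · rintro (⟨w, hw, hlen, rfl⟩ | ⟨a, ha, _, ⟨w, hw, hlen, rfl⟩, rfl⟩)
      · exact ⟨w, hw, by omega, rfl⟩
      · exact ⟨a :: w, List.forall_mem_cons.2 ⟨ha, hw⟩, by simpa using hlen, rfl⟩
    · rintro ⟨_ | ⟨a, w⟩, hw, hlen, rfl⟩
      · exact Or.inl ⟨[], hw, Nat.zero_le n, rfl⟩
      · obtain ⟨ha, hw⟩ := List.forall_mem_cons.1 hw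
        exact Or.inr ⟨a, ha, w.prod, ⟨w, hw, by simpa using hlen, rfl⟩, rfl⟩

theorem isGeodesic_iff_forall_prod_notMem_ball {w : List G} :
    IsGeodesic A w ↔ IsWordOver A w ∧ ∀ m < w.length, w.prod ∉ ball A m := by
  refine and_congr_right fun _ => ⟨fun h m hm hmem => ?_, fun h v hv hvw => ?_⟩
  · obtain ⟨v, hv, hvm, hvw⟩ := mem_ball.1 hmem
    have := h v hv hvw
    omega
  · by_contra! hlt
    exact h v.length hlt (mem_ball.2 ⟨v, hv, le_rfl, hvw⟩)

theorem closure_eq_top_of_forall_mem_ball {n : ℕ} (h : ∀ g : G, g ∈ ball A n) :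
    Subgroup.closure (A : Set G) = ⊤ := by
  refine eq_top_iff.2 fun g _ => ?_
  obtain ⟨w, hw, -, rfl⟩ := mem_ball.1 (h g)
  exact Subgroup.list_prod_mem _ fun x hx => Subgroup.subset_closure (hw x hx)

end Ball

theorem exists_mul_ne_mul_of_closure_eq_top {G : Type*} [Group G] {S : Set G}
    (hS : Subgroup.closure S = ⊤) {x y : G} (hxy : x * y ≠ y * x) :
    ∃ a ∈ S, ∃ b ∈ S, a * b ≠ b * a := by
  by_contra! h
  have hcomm := isMulCommutative_iff_of_setLike.1 (Subgroup.isMulCommutative_closure h)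
  exact hxy (hcomm x (hS ▸ trivial) y (hS ▸ trivial))

namespace QuaternionGroup

theorem mem_words_length_le_two_of_mul_ne_mul :
    ∀ x y : QuaternionGroup 2, x * y ≠ y * x → ∀ g : QuaternionGroup 2,
      ∃ v ∈ [[], [x], [x⁻¹], [y], [y⁻¹], [x, x], [x, y], [y, x]], v.prod = g := by
  decide

theorem exists_word_length_le_two {A : Finset (QuaternionGroup 2)} (hA : IsSymmGen A)
    (g : QuaternionGroup 2) : ∃ v, IsWordOver A v ∧ v.length ≤ 2 ∧ v.prod = g := by
  obtain ⟨x, hx, y, hy, hxy⟩ :=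
    exists_mul_ne_mul_of_closure_eq_top hA.1 (show a 1 * xa 0 ≠ xa 0 * a 1 by decide)
  obtain ⟨v, hv, rfl⟩ := mem_words_length_le_two_of_mul_ne_mul x y hxy g
  rw [Finset.mem_coe] at hx hy
  have hx' := hA.2 x hx
  have hy' := hA.2 y hy
  simp only [List.mem_cons, List.not_mem_nil, or_false] at hv
  rcases hv with rfl | rfl | rfl | rfl | rfl | rfl | rfl | rfl <;>
    exact ⟨_, by simp [IsWordOver, *], by simp, rfl⟩

end QuaternionGroup

section Counterexample

open QuaternionGroup

/-- With `a 1 = i`, `xa 0 = j` and `a 2 = -1`, this is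
`{(±i, 1), (1, ±i), (1, ±j), ±(j, j)}`. -/
def quaternionProductGens : Finset (QuaternionGroup 2 × QuaternionGroup 2) :=
  {(a 1, 1), (a 3, 1), (1, a 1), (1, a 3), (1, xa 0), (1, xa 2), (xa 0, xa 0), (xa 2, xa 2)}

set_option maxRecDepth 100000 in
theorem isSymmGen_quaternionProductGens : IsSymmGen quaternionProductGens :=
  ⟨closure_eq_top_of_forall_mem_ball (n := 4) (by decide), by decide⟩

set_option maxRecDepth 100000 in
/-- The word `(1, i) (j, j) (1, -i)` represents `(j, -j)`, which is not a product of two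
generators, but its subsequence `(1, i) (1, -i)` represents the identity. -/
theorem not_piecewiseExcluding_geo_quaternionProductGens :
    ¬ PiecewiseExcluding quaternionProductGens (Geo quaternionProductGens) := by
  intro hPE
  have hw : IsGeodesic quaternionProductGens [(1, a 1), (xa 0, xa 0), (1, a 3)] :=
    isGeodesic_iff_forall_prod_notMem_ball.2 (by decide)
  have hu : IsGeodesic quaternionProductGens [(1, a 1), (1, a 3)] :=
    hPE.mem_of_sublist hw.1 hw (by decide)
  have := hu.2 [] (List.forall_mem_nil _) (by decide)
  simp at this

end Counterexample

/-- There is a finite symmetric generating set of `Q₈ × Q₈` whose geodesic language is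
not piecewise excluding; since `Q₈` has piecewise excluding geodesic language for all
finite symmetric generating sets, the class of such groups is not closed under direct
products. -/
theorem quaternion_product_not_piecewise_excluding :
    (∀ A : Finset (QuaternionGroup 2), IsSymmGen A → PiecewiseExcluding A (Geo A)) ∧
    ∃ A : Finset (QuaternionGroup 2 × QuaternionGroup 2),
      IsSymmGen A ∧ ¬ PiecewiseExcluding A (Geo A) :=
  ⟨fun _ hA => piecewiseExcluding_geo_of_forall_exists_word_length_le_two
      (QuaternionGroup.exists_word_length_le_two hA),
    quaternionProductGens, isSymmGen_quaternionProductGens,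
    not_piecewiseExcluding_geo_quaternionProductGens⟩
end

section
/- Let G = BS(1,2) be the presented group on generators a, t with the single relator t a t⁻¹ a⁻². For every nontrivial normal subgroup N of G, the quotient G/N is either abelian, or there exists a finite symmetric generating set B of G/N such that the geodesic language Geo(G/N, B) is not piecewise excluding. -/
/-- The single relator of `BS(1,2) = ⟨a, t ∣ t a t⁻¹ a⁻²⟩`, with `a` the image of `0`
and `t` the image of `1`. -/
def bs12Rels : Set (FreeGroup (Fin 2)) :=
  {FreeGroup.of 1 * FreeGroup.of 0 * (FreeGroup.of 1)⁻¹ * ((FreeGroup.of 0) ^ 2)⁻¹}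

/-!
If `a` dies in the quotient, the quotient is cyclic, generated by `t`. Otherwise we find a finite
symmetric generating set and letters `x, y` such that `x⁻¹ y x` is geodesic while `x⁻¹ x` is not.
This suffices because a piecewise excluding language is closed under taking subwords. The set
`{t, a}^±` with the word `t⁻¹ a t` works unless `a` has order 3 or 5; in that case we use
`{t, a t, a t⁻¹}^±` with the word `t⁻¹ (a t⁻¹) t`.

Both geodesicity checks compute with the root `c = t⁻ⁿ a tⁿ` of `a = c ^ 2 ^ n`, which satisfies
the same relation `t c t⁻¹ = c²`, and with cosets of `⟨c⟩`. Two facts do the work: a power of `t`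
lying in `⟨c⟩` is trivial, because conjugation by `t` squares `⟨c⟩` but fixes `t`; and `tⁿ = 1`
forces `c ^ (2 ^ n - 1) = 1`.
-/

section Words

variable {G : Type*} [Group G] {A : Finset G}

theorem not_piecewiseExcluding_geo_of_sublist {w v : List G} (hw : IsGeodesic A w)
    (hvw : v.Sublist w) (hv : ¬ IsGeodesic A v) : ¬ PiecewiseExcluding A (Geo A) := by
  rintro ⟨F, -, hF⟩
  obtain ⟨u, huF, huv⟩ : ∃ u ∈ F, u.Sublist v := by
    by_contra! h
    exact hv ((hF v fun x hx => hw.1 x (hvw.subset hx)).2 h)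
  exact (hF w hw.1).1 hw u huF (huv.trans hvw)

theorem not_isGeodesic_of_prod_eq_one {w : List G} (hw : w ≠ []) (h : w.prod = 1) :
    ¬ IsGeodesic A w := fun hg =>
  hw (List.eq_nil_of_length_eq_zero (Nat.le_zero.1 (hg.2 [] (by simp [IsWordOver]) h.symm)))

theorem isGeodesic_triple {x y z : G} (hx : x ∈ A) (hy : y ∈ A) (hz : z ∈ A)
    (h0 : x * y * z ≠ 1) (h1 : ∀ b ∈ A, b ≠ x * y * z)
    (h2 : ∀ b ∈ A, ∀ b' ∈ A, b * b' ≠ x * y * z) : IsGeodesic A [x, y, z] := by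
  refine ⟨by simp [IsWordOver, hx, hy, hz], fun v hv hprod => ?_⟩
  rcases v with _ | ⟨b, _ | ⟨b', _ | ⟨b'', v⟩⟩⟩
  · exact absurd (by simpa [mul_assoc] using hprod.symm) h0
  · exact absurd (by simpa [mul_assoc] using hprod) (h1 b (hv b (by simp)))
  · exact absurd (by simpa [mul_assoc] using hprod) (h2 b (hv b (by simp)) b' (hv b' (by simp)))
  · simp

theorem not_piecewiseExcluding_geo_of_conj {x y : G} (hx : x ∈ A) (hx' : x⁻¹ ∈ A) (hy : y ∈ A)
    (h1 : ∀ b ∈ A, b ≠ x⁻¹ * y * x) (h2 : ∀ b ∈ A, ∀ b' ∈ A, b * b' ≠ x⁻¹ * y * x) :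
    ¬ PiecewiseExcluding A (Geo A) :=
  not_piecewiseExcluding_geo_of_sublist (v := [x⁻¹, x])
    (isGeodesic_triple hx' hy hx (inv_mul_cancel x ▸ h2 x⁻¹ hx' x hx).symm h1 h2)
    (by simp) (not_isGeodesic_of_prod_eq_one (by simp) (by simp))

theorem isSymmGen_of_mem_closure {B : Finset G} {a t : G} (hgen : Subgroup.closure {a, t} = ⊤)
    (ha : a ∈ Subgroup.closure (B : Set G)) (ht : t ∈ Subgroup.closure (B : Set G))
    (hinv : ∀ b ∈ B, b⁻¹ ∈ B) : IsSymmGen B :=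
  ⟨eq_top_mono ((Subgroup.closure_le _).2 (Set.insert_subset ha (Set.singleton_subset_iff.2 ht)))
    hgen, hinv⟩

end Words

section BaumslagSolitar

variable {Q : Type*} [Group Q] {a t : Q}

theorem conj_pow_eq_pow_two_pow (hrel : t * a * t⁻¹ = a ^ 2) (n : ℕ) :
    t ^ n * a * (t ^ n)⁻¹ = a ^ 2 ^ n := by
  induction n with
  | zero => simp
  | succ n ih => calc
      t ^ (n + 1) * a * (t ^ (n + 1))⁻¹ = t * (t ^ n * a * (t ^ n)⁻¹) * t⁻¹ := by group
      _ = (t * a * t⁻¹) ^ 2 ^ n := by rw [ih, conj_pow]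
      _ = a ^ 2 ^ (n + 1) := by rw [hrel, ← pow_mul, pow_succ']

theorem conj_zpow_eq_zpow_two_mul (hrel : t * a * t⁻¹ = a ^ 2) (k : ℤ) :
    t * a ^ k * t⁻¹ = a ^ (2 * k) := by
  rw [← conj_zpow, hrel, zpow_mul, zpow_ofNat]

theorem inv_conj_zpow_two_mul (hrel : t * a * t⁻¹ = a ^ 2) (k : ℤ) :
    t⁻¹ * a ^ (2 * k) * t = a ^ k := by
  rw [← conj_zpow_eq_zpow_two_mul hrel]; group

theorem exists_conj_root (hrel : t * a * t⁻¹ = a ^ 2) (n : ℕ) :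
    ∃ c : Q, t * c * t⁻¹ = c ^ 2 ∧ a = c ^ 2 ^ n := by
  have hpow (k : ℕ) : ((t ^ n)⁻¹ * a * t ^ n) ^ k = (t ^ n)⁻¹ * a ^ k * t ^ n := by
    simpa using conj_pow (a := (t ^ n)⁻¹) (b := a) (i := k)
  refine ⟨(t ^ n)⁻¹ * a * t ^ n, ?_, ?_⟩
  · rw [hpow, ← hrel]; group
  · rw [hpow, ← conj_pow_eq_pow_two_pow hrel]; group

theorem pow_eq_one_of_pow_mem_zpowers (hrel : t * a * t⁻¹ = a ^ 2) {n : ℕ}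
    (h : t ^ n ∈ Subgroup.zpowers a) : t ^ n = 1 := by
  obtain ⟨k, hk⟩ := Subgroup.mem_zpowers_iff.1 h
  have hk2 : a ^ k * a ^ k = a ^ k := by
    rw [← zpow_add, ← two_mul, ← conj_zpow_eq_zpow_two_mul hrel, hk]; group
  rw [← hk, ← mul_eq_left.1 hk2]

theorem pow_two_pow_sub_one_eq_one_of_pow_mem_zpowers (hrel : t * a * t⁻¹ = a ^ 2) {n : ℕ}
    (h : t ^ n ∈ Subgroup.zpowers a) : a ^ (2 ^ n - 1) = 1 := by
  have h2n : a ^ 2 ^ n = a := by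
    simpa [pow_eq_one_of_pow_mem_zpowers hrel h] using (conj_pow_eq_pow_two_pow hrel n).symm
  rwa [← pow_sub_one_mul (by positivity), mul_eq_right] at h2n

theorem three_dvd_of_sq_eq_zpow (hrel : t * a * t⁻¹ = a ^ 2) (ha : a ≠ 1) {k : ℤ}
    (h : t ^ 2 = a ^ k) : (3 : ℤ) ∣ k := by
  have hmem : t ^ 2 ∈ Subgroup.zpowers a := h ▸ Subgroup.zpow_mem_zpowers a k
  have h3 : orderOf a = 3 := orderOf_eq_prime
    (by simpa using pow_two_pow_sub_one_eq_one_of_pow_mem_zpowers hrel hmem) ha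
  have := orderOf_dvd_iff_zpow_eq_one.2 (h ▸ pow_eq_one_of_pow_mem_zpowers hrel hmem)
  rwa [h3, Nat.cast_ofNat] at this

theorem zpow_mul_zpow_mul_mem_zpowers (hrel : t * a * t⁻¹ = a ^ 2) {ε : ℤ} (hε : ε = 1 ∨ ε = -1)
    (m n δ : ℤ) :
    a ^ (2 * m) * t ^ ε * (a ^ (2 * n) * t ^ δ) * t ^ (-(ε + δ)) ∈ Subgroup.zpowers a := by
  have e : a ^ (2 * m) * t ^ ε * (a ^ (2 * n) * t ^ δ) * t ^ (-(ε + δ)) =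
      a ^ (2 * m) * (t ^ ε * a ^ (2 * n) * t ^ (-ε)) := by group
  rw [e]
  refine mul_mem (Subgroup.zpow_mem_zpowers a _) ?_
  rcases hε with rfl | rfl
  · rw [zpow_one, zpow_neg_one, conj_zpow_eq_zpow_two_mul hrel]
    exact Subgroup.zpow_mem_zpowers a _
  · rw [zpow_neg_one, neg_neg, zpow_one, inv_conj_zpow_two_mul hrel]
    exact Subgroup.zpow_mem_zpowers a _

variable [DecidableEq Q]

def stdGens (a t : Q) : Finset Q := {t, t⁻¹, a, a⁻¹}

def skewGens (a t : Q) : Finset Q := {t, t⁻¹, a * t, (a * t)⁻¹, a * t⁻¹, (a * t⁻¹)⁻¹}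

theorem isSymmGen_stdGens (hgen : Subgroup.closure {a, t} = ⊤) : IsSymmGen (stdGens a t) := by
  refine isSymmGen_of_mem_closure hgen (Subgroup.subset_closure (by simp [stdGens]))
    (Subgroup.subset_closure (by simp [stdGens])) ?_
  simp only [stdGens, Finset.mem_insert, Finset.mem_singleton]
  rintro b (rfl | rfl | rfl | rfl) <;> simp

theorem isSymmGen_skewGens (hgen : Subgroup.closure {a, t} = ⊤) : IsSymmGen (skewGens a t) := by
  refine isSymmGen_of_mem_closure hgen ?_ (Subgroup.subset_closure (by simp [skewGens])) ?_
  · have hmem (b : Q) (hb : b ∈ skewGens a t) : b ∈ Subgroup.closure (skewGens a t : Set Q) :=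
      Subgroup.subset_closure hb
    simpa using mul_mem (hmem (a * t) (by simp [skewGens])) (hmem t⁻¹ (by simp [skewGens]))
  · simp only [skewGens, Finset.mem_insert, Finset.mem_singleton]
    rintro b (rfl | rfl | rfl | rfl | rfl | rfl) <;> simp

theorem not_piecewiseExcluding_geo_stdGens (hrel : t * a * t⁻¹ = a ^ 2)
    (h1 : a ≠ 1) (h3 : a ^ 3 ≠ 1) (h5 : a ^ 5 ≠ 1) :
    ¬ PiecewiseExcluding (stdGens a t) (Geo (stdGens a t)) := by
  obtain ⟨s, hs, rfl⟩ : ∃ s : Q, t * s * t⁻¹ = s ^ 2 ∧ a = s ^ 2 := by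
    simpa using exists_conj_root hrel 1
  have hs1 : s ≠ 1 := by rintro rfl; simp at h1
  have hs3 : s ^ 3 ≠ 1 := fun h => h3 (by rw [← pow_mul, mul_comm, pow_mul, h, one_pow])
  have hs5 : s ^ 5 ≠ 1 := fun h => h5 (by rw [← pow_mul, mul_comm, pow_mul, h, one_pow])
  set H := Subgroup.zpowers s
  have ht : t ∉ H := fun h => hs1 (by
    simpa using pow_two_pow_sub_one_eq_one_of_pow_mem_zpowers hs (n := 1) (by simpa using h))
  have ht2 : t ^ 2 ∉ H := fun h => hs3 (by
    simpa using pow_two_pow_sub_one_eq_one_of_pow_mem_zpowers hs h)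
  have hs2 : s ^ 2 ∈ H := Subgroup.npow_mem_zpowers s 2
  have hs2' : (s ^ 2)⁻¹ ∈ H := inv_mem hs2
  have htt : t * t ∉ H := by rwa [← pow_two]
  have htt' : t⁻¹ * t⁻¹ ∉ H := by rwa [← mul_inv_rev, inv_mem_iff]
  have hconj : t⁻¹ * s ^ 2 * t = s := by rw [← hs]; group
  refine not_piecewiseExcluding_geo_of_conj (x := t) (y := s ^ 2) (by simp [stdGens])
    (by simp [stdGens]) (by simp [stdGens]) ?_ ?_ <;> rw [hconj]
  all_goals
    simp only [stdGens, Finset.mem_insert, Finset.mem_singleton, forall_eq_or_imp, forall_eq]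
    and_intros
  -- A word of length at most 2 with exactly one letter `t^±1`, or equal to `t t` or `t⁻¹ t⁻¹`,
  -- evaluates outside `⟨s⟩`; every other one evaluates to `s ^ k` with `k ∈ {0, ±2, ±4}`, and
  -- `s ^ (k - 1) ≠ 1`.
  all_goals
    intro h
    have hH : s ∈ H := Subgroup.mem_zpowers s
    rw [← h] at hH
    try simp only [mul_mem_cancel_left hs2, mul_mem_cancel_left hs2',
      mul_mem_cancel_right hs2, mul_mem_cancel_right hs2', inv_mem_iff, ht, htt,
      htt'] at hH
  all_goals rw [← mul_inv_eq_one] at h; group at h; simp_all [zpow_neg]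

theorem exists_eq_zpow_mul_zpow_of_mem_skewGens (hrel : t * a * t⁻¹ = a ^ 2) {b : Q}
    (hb : b ∈ skewGens (a ^ 4) t) :
    ∃ m ε : ℤ, (ε = 1 ∧ (m = 0 ∨ m = 2 ∨ m = -4) ∨ ε = -1 ∧ (m = 0 ∨ m = -1 ∨ m = 2)) ∧
      b = a ^ (2 * m) * t ^ ε := by
  simp only [skewGens, Finset.mem_insert, Finset.mem_singleton] at hb
  rcases hb with rfl | rfl | rfl | rfl | rfl | rfl
  · exact ⟨0, 1, by simp⟩
  · exact ⟨0, -1, by simp⟩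
  · exact ⟨2, 1, by simp⟩
  · exact ⟨-1, -1, by simp, by rw [← inv_conj_zpow_two_mul hrel]; group⟩
  · exact ⟨2, -1, by simp⟩
  · exact ⟨-4, 1, by simp, by rw [← conj_zpow_eq_zpow_two_mul hrel]; group⟩

theorem not_piecewiseExcluding_geo_skewGens (hrel : t * a * t⁻¹ = a ^ 2)
    (h1 : a ≠ 1) (h7 : a ^ 7 ≠ 1) :
    ¬ PiecewiseExcluding (skewGens a t) (Geo (skewGens a t)) := by
  obtain ⟨c, hc, rfl⟩ : ∃ c : Q, t * c * t⁻¹ = c ^ 2 ∧ a = c ^ 4 := by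
    simpa using exists_conj_root hrel 2
  set H := Subgroup.zpowers c
  have hc1 : c ≠ 1 := by rintro rfl; simp at h1
  have hc2 : c ^ 2 ≠ 1 := fun h => h1 (by rw [show 4 = 2 * 2 from rfl, pow_mul, h, one_pow])
  have hc7 : c ^ 7 ≠ 1 := fun h => h7 (by rw [← pow_mul, mul_comm, pow_mul, h, one_pow])
  have ht : t ∉ H := fun h => hc1 (by
    simpa using pow_two_pow_sub_one_eq_one_of_pow_mem_zpowers hc (n := 1) (by simpa using h))
  have ht3 : t ^ 3 ∉ H := fun h => hc7 (by
    simpa using pow_two_pow_sub_one_eq_one_of_pow_mem_zpowers hc h)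
  have hconj : t⁻¹ * (c ^ 4 * t⁻¹) * t = c ^ 2 * t⁻¹ := by
    calc t⁻¹ * (c ^ 4 * t⁻¹) * t = (t⁻¹ * c ^ (2 * 2 : ℤ) * t) * t⁻¹ := by group
      _ = c ^ 2 * t⁻¹ := by rw [inv_conj_zpow_two_mul hc]; simp
  refine not_piecewiseExcluding_geo_of_conj (x := t) (y := c ^ 4 * t⁻¹) (by simp [skewGens])
    (by simp [skewGens]) (by simp [skewGens]) ?_ ?_ <;> rw [hconj]
  · intro b hb h
    obtain ⟨m, ε, hmε, rfl⟩ := exists_eq_zpow_mul_zpow_of_mem_skewGens hc hb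
    have hpow : t ^ (ε + 1) = c ^ (2 - 2 * m) := by
      calc t ^ (ε + 1) = (c ^ (2 * m))⁻¹ * (c ^ (2 * m) * t ^ ε) * t := by group
        _ = c ^ (2 - 2 * m) := by rw [h]; group
    rcases hmε with ⟨rfl, hm⟩ | ⟨rfl, hm⟩
    · have h3 := three_dvd_of_sq_eq_zpow hc hc1 (by simpa using hpow)
      rcases hm with rfl | rfl | rfl <;> norm_num at h3
    · rcases hm with rfl | rfl | rfl <;> simp_all
  · intro b hb b' hb' h
    obtain ⟨m, ε, hmε, rfl⟩ := exists_eq_zpow_mul_zpow_of_mem_skewGens hc hb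
    obtain ⟨n, δ, hnδ, rfl⟩ := exists_eq_zpow_mul_zpow_of_mem_skewGens hc hb'
    have hε : ε = 1 ∨ ε = -1 := hmε.imp And.left And.left
    have hδ : δ = 1 ∨ δ = -1 := hnδ.imp And.left And.left
    have hpow : t ^ (ε + δ + 1) ∈ H := by
      have e : t ^ (ε + δ + 1) = (c ^ (2 * m) * t ^ ε * (c ^ (2 * n) * t ^ δ) *
          t ^ (-(ε + δ)))⁻¹ * (c ^ 2 * t⁻¹ * t) := by rw [← h]; group
      rw [e, inv_mul_cancel_right]
      exact mul_mem (inv_mem (zpow_mul_zpow_mul_mem_zpowers hc hε m n δ))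
        (Subgroup.npow_mem_zpowers c 2)
    rcases hε with rfl | rfl <;> rcases hδ with rfl | rfl <;> simp [ht, ht3] at hpow

end BaumslagSolitar

theorem bs_quotient_commutative_or_not_piecewiseExcluding {Q : Type*} [Group Q] {a t : Q}
    (hrel : t * a * t⁻¹ = a ^ 2) (hgen : Subgroup.closure {a, t} = ⊤) :
    (∀ x y : Q, x * y = y * x) ∨ ∃ B : Finset Q, IsSymmGen B ∧ ¬ PiecewiseExcluding B (Geo B) := by
  classical
  by_cases h1 : a = 1
  · subst h1
    rw [Subgroup.closure_insert_one, ← Subgroup.zpowers_eq_closure] at hgen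
    left
    intro x y
    obtain ⟨m, rfl⟩ := Subgroup.mem_zpowers_iff.1 (hgen ▸ Subgroup.mem_top x)
    obtain ⟨n, rfl⟩ := Subgroup.mem_zpowers_iff.1 (hgen ▸ Subgroup.mem_top y)
    exact zpow_mul_comm t m n
  right
  by_cases h35 : a ^ 3 = 1 ∨ a ^ 5 = 1
  · have h7 : a ^ 7 ≠ 1 := fun h7 =>
      h1 (by rcases h35 with h | h <;> simpa using pow_gcd_eq_one.2 ⟨h7, h⟩)
    exact ⟨skewGens a t, isSymmGen_skewGens hgen, not_piecewiseExcluding_geo_skewGens hrel h1 h7⟩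
  · obtain ⟨h3, h5⟩ := not_or.1 h35
    exact ⟨stdGens a t, isSymmGen_stdGens hgen, not_piecewiseExcluding_geo_stdGens hrel h1 h3 h5⟩

theorem bs12_rel : (PresentedGroup.of 1 : PresentedGroup bs12Rels) * PresentedGroup.of 0 *
    (PresentedGroup.of 1)⁻¹ = PresentedGroup.of 0 ^ 2 :=
  mul_inv_eq_one.1 <| by
    have h := PresentedGroup.one_of_mem (rels := bs12Rels) rfl
    rw [map_mul, map_mul, map_mul, map_inv, map_inv, map_pow] at h
    exact h

theorem bs12_closure_eq_top :
    Subgroup.closure {PresentedGroup.of 0, PresentedGroup.of 1} =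
      (⊤ : Subgroup (PresentedGroup bs12Rels)) := by
  rw [← PresentedGroup.closure_range_of]
  congr
  ext
  simp [Fin.exists_fin_two, eq_comm]

theorem bs12_proper_quotients_general
    (N : Subgroup (PresentedGroup bs12Rels)) [N.Normal] :
    (∀ x y : PresentedGroup bs12Rels ⧸ N, x * y = y * x) ∨
    ∃ B : Finset (PresentedGroup bs12Rels ⧸ N),
      IsSymmGen B ∧ ¬ PiecewiseExcluding B (Geo B) := by
  let π := QuotientGroup.mk' N
  refine bs_quotient_commutative_or_not_piecewiseExcluding
    (a := π (PresentedGroup.of 0)) (t := π (PresentedGroup.of 1)) ?_ ?_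
  · simp only [← map_mul, ← map_inv, ← map_pow, bs12_rel]
  · rw [← Set.image_pair, ← MonoidHom.map_closure, bs12_closure_eq_top,
      Subgroup.map_top_of_surjective _ (QuotientGroup.mk'_surjective N)]

/-- Every proper quotient of `BS(1,2)` is either abelian or has a finite symmetric
generating set whose geodesic language is not piecewise excluding. -/
theorem bs12_proper_quotients
    (N : Subgroup (PresentedGroup bs12Rels)) [N.Normal] (hN : N ≠ ⊥) :
    (∀ x y : PresentedGroup bs12Rels ⧸ N, x * y = y * x) ∨
    ∃ B : Finset (PresentedGroup bs12Rels ⧸ N),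
      IsSymmGen B ∧ ¬ PiecewiseExcluding B (Geo B) :=
  bs12_proper_quotients_general N
end

section
/- In the dihedral group D = DihedralGroup 4 of order 8, let a = sr 0, b = sr 1, and t = r 2 (so a, b, t are involutions and t = (ab)²), and let A = {a, b, t}, a finite symmetric generating set of D. Then the geodesic language Geo(D, A) is exactly the set of words over A of length at most two whose letters are pairwise distinct, and Geo(D, A) is piecewise excluding. -/
namespace DihedralAux

open DihedralGroup

abbrev D := DihedralGroup 4

abbrev A : Finset D := {sr 0, sr 1, r 2}

/-- geodesic length function -/
def ell (g : D) : ℕ := if g = 1 then 0 else if g ∈ A then 1 else 2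

/-- witness word -/
def W (g : D) : List D :=
  if g = 1 then [] else
  if g = sr 0 then [sr 0] else
  if g = sr 1 then [sr 1] else
  if g = r 2 then [r 2] else
  if g = r 1 then [sr 0, sr 1] else
  if g = r 3 then [sr 1, sr 0] else
  if g = sr 2 then [sr 0, r 2] else [sr 1, r 2]

lemma W_spec' : ∀ g : D, (∀ x ∈ W g, x ∈ A) ∧ (W g).prod = g ∧ (W g).length = ell g := by
  decide

lemma W_spec : ∀ g : D, IsWordOver A (W g) ∧ (W g).prod = g ∧ (W g).length = ell g :=
  W_spec'

lemma ell_le_two : ∀ g : D, ell g ≤ 2 := by decide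

lemma ell_step : ∀ x ∈ A, ∀ g : D, ell (x * g) ≤ 1 + ell g := by decide

lemma ell_le_length {w : List D} (hw : IsWordOver A w) : ell w.prod ≤ w.length := by
  induction w with
  | nil => simp [ell]
  | cons x w ih =>
    rw [List.prod_cons, List.length_cons]
    calc ell (x * w.prod) ≤ 1 + ell w.prod := ell_step x (hw x (by simp)) _
    _ ≤ 1 + w.length := by
        have := ih (fun y hy => hw y (List.mem_cons_of_mem _ hy))
        omega
    _ = w.length + 1 := by omega

lemma geo_iff {w : List D} : w ∈ Geo A ↔ IsWordOver A w ∧ w.length = ell w.prod := by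
  constructor
  · rintro ⟨hw, hmin⟩
    refine ⟨hw, le_antisymm ?_ (ell_le_length hw)⟩
    obtain ⟨h1, h2, h3⟩ := W_spec w.prod
    exact h3 ▸ hmin _ h1 h2
  · rintro ⟨hw, hlen⟩
    exact ⟨hw, fun v hv hpv => by rw [hlen, ← hpv]; exact ell_le_length hv⟩

lemma sq_one : ∀ x ∈ A, x * x = 1 := by decide

lemma ell_one_of_mem : ∀ x ∈ A, ell x = 1 := by decide

lemma ell_two_of_ne : ∀ x ∈ A, ∀ y ∈ A, x ≠ y → ell (x * y) = 2 := by decide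

lemma geo_char (w : List D) :
    w ∈ Geo A ↔ IsWordOver A w ∧ w.length ≤ 2 ∧ w.Nodup := by
  rw [geo_iff]
  constructor
  · rintro ⟨hw, hlen⟩
    have hle : w.length ≤ 2 := hlen ▸ ell_le_two w.prod
    refine ⟨hw, hle, ?_⟩
    match w, hw, hlen with
    | [], _, _ => exact List.nodup_nil
    | [x], _, _ => simp
    | [x, y], hw, hlen =>
      simp only [List.nodup_cons, List.mem_singleton, List.not_mem_nil, not_false_iff,
        List.nodup_nil, and_true]
      intro hxy
      subst hxy
      have hx : x ∈ A := hw x (by simp)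
      rw [show ([x, x] : List D).prod = x * x by simp, sq_one x hx] at hlen
      simp [ell] at hlen
  · rintro ⟨hw, hle, hnd⟩
    refine ⟨hw, ?_⟩
    match w, hw, hle, hnd with
    | [], _, _, _ => simp [ell]
    | [x], hw, _, _ =>
      have hx : x ∈ A := hw x (by simp)
      simpa using (ell_one_of_mem x hx).symm
    | [x, y], hw, _, hnd =>
      have hx : x ∈ A := hw x (by simp)
      have hy : y ∈ A := hw y (by simp)
      have hxy : x ≠ y := by
        simp only [List.nodup_cons, List.mem_singleton] at hnd
        exact hnd.1
      rw [show ([x, y] : List D).prod = x * y by simp, ell_two_of_ne x hx y hy hxy]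
      rfl

def F : Finset (List D) :=
  {[sr 0, sr 0], [sr 1, sr 1], [r 2, r 2],
   [sr 0, sr 1, r 2], [sr 0, r 2, sr 1], [sr 1, sr 0, r 2],
   [sr 1, r 2, sr 0], [r 2, sr 0, sr 1], [r 2, sr 1, sr 0]}

lemma F_words : ∀ u ∈ F, IsWordOver A u :=
  (by decide : ∀ u ∈ F, ∀ x ∈ u, x ∈ A)

lemma len_le_three {w : List D} (hw : IsWordOver A w) (hnd : w.Nodup) : w.length ≤ 3 := by
  have h1 : w.toFinset.card = w.length := List.toFinset_card_of_nodup hnd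
  have h2 : w.toFinset ⊆ A := fun x hx => hw x (List.mem_toFinset.mp hx)
  have := Finset.card_le_card h2
  have hA : A.card = 3 := by decide
  omega

lemma nodup_three_mem_F {w : List D} (hw : IsWordOver A w) (hnd : w.Nodup)
    (hlen : w.length = 3) : w ∈ F := by
  match w, hw, hnd, hlen with
  | [x, y, z], hw, hnd, _ =>
    have hx : x ∈ A := hw x (by simp)
    have hy : y ∈ A := hw y (by simp)
    have hz : z ∈ A := hw z (by simp)
    simp only [List.nodup_cons, List.mem_cons, List.mem_singleton, List.not_mem_nil,
      or_false, not_or, List.nodup_nil, and_true] at hnd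
    fin_cases hx <;> fin_cases hy <;> fin_cases hz <;> simp_all <;> decide

lemma symmgen : IsSymmGen A := by
  constructor
  · rw [eq_top_iff]
    intro g _
    obtain ⟨h1, h2, _⟩ := W_spec g
    rw [← h2]
    exact Subgroup.list_prod_mem _ (fun x hx => Subgroup.subset_closure (h1 x hx))
  · decide

lemma pe : PiecewiseExcluding A (Geo A) := by
  refine ⟨F, F_words, fun w hw => ?_⟩
  rw [geo_char]
  constructor
  · rintro ⟨-, hle, hnd⟩ u hu hsub
    fin_cases hu <;>
      first
        | exact (List.nodup_iff_sublist.mp hnd _ hsub)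
        | (have := hsub.length_le; simp at this; omega)
  · intro h
    have hnd : w.Nodup := by
      by_contra hdup
      obtain ⟨x, hx⟩ := List.exists_duplicate_iff_not_nodup.mpr hdup
      have hxw : x ∈ w := hx.mem
      have hxA : x ∈ A := hw x hxw
      have hsub : List.Sublist [x, x] w := List.duplicate_iff_sublist.mp hx
      fin_cases hxA
      · exact h _ (by decide) hsub
      · exact h _ (by decide) hsub
      · exact h _ (by decide) hsub
    refine ⟨hw, ?_, hnd⟩
    by_contra hlen
    push_neg at hlen
    set w3 := w.take 3 with hw3
    have hsub : List.Sublist w3 w := List.take_sublist 3 w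
    have hnd3 : w3.Nodup := hnd.sublist hsub
    have hw3A : IsWordOver A w3 := fun x hx => hw x (hsub.mem hx)
    have hl3 : w3.length = 3 := by
      have h3 : w.length ≤ 3 := len_le_three hw hnd
      simp [hw3]
      omega
    exact h w3 (nodup_three_mem_F hw3A hnd3 hl3) hsub

end DihedralAux

/-- In `D₈ = DihedralGroup 4`, with `a = sr 0`, `b = sr 1`, `t = r 2` and
`A = {a, b, t}`, the set `A` is a finite symmetric generating set, the geodesic language
is exactly the set of words over `A` of length at most two with pairwise distinct
letters, and it is piecewise excluding. -/
theorem dihedral_three_gens_piecewise_excluding :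
    IsSymmGen ({DihedralGroup.sr 0, DihedralGroup.sr 1, DihedralGroup.r 2} :
      Finset (DihedralGroup 4)) ∧
    (∀ w : List (DihedralGroup 4),
      w ∈ Geo ({DihedralGroup.sr 0, DihedralGroup.sr 1, DihedralGroup.r 2} :
          Finset (DihedralGroup 4)) ↔
        (IsWordOver ({DihedralGroup.sr 0, DihedralGroup.sr 1, DihedralGroup.r 2} :
            Finset (DihedralGroup 4)) w ∧ w.length ≤ 2 ∧ w.Nodup)) ∧
    PiecewiseExcluding
      ({DihedralGroup.sr 0, DihedralGroup.sr 1, DihedralGroup.r 2} :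
        Finset (DihedralGroup 4))
      (Geo ({DihedralGroup.sr 0, DihedralGroup.sr 1, DihedralGroup.r 2} :
        Finset (DihedralGroup 4))) :=
  ⟨DihedralAux.symmgen, DihedralAux.geo_char, DihedralAux.pe⟩
end

section
/- In the dihedral group D = DihedralGroup 4 of order 8, let a = sr 0 and b = sr 1, and let B = {a, b}, a finite symmetric generating set of D (a and b are involutions). Then the three-letter word a·b·a is geodesic over B, and consequently the geodesic language Geo(D, B) is not piecewise excluding. -/
open DihedralGroup in
lemma aux_geo : IsGeodesic ({sr 0, sr 1} : Finset (DihedralGroup 4))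
    [sr 0, sr 1, sr 0] := by
  constructor
  · intro x hx; fin_cases hx <;> decide
  · intro v hv hp
    by_contra h
    push_neg at h
    rcases v with _ | ⟨x, _ | ⟨y, _ | ⟨z, t⟩⟩⟩
    · exact absurd hp (by decide)
    · have hx := hv x (by simp)
      simp only [Finset.mem_insert, Finset.mem_singleton] at hx
      rcases hx with rfl | rfl <;> exact absurd hp (by decide)
    · have hx := hv x (by simp)
      have hy := hv y (by simp)
      simp only [Finset.mem_insert, Finset.mem_singleton] at hx hy
      rcases hx with rfl | rfl <;> rcases hy with rfl | rfl <;>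
        exact absurd hp (by decide)
    · simp at h; omega

open DihedralGroup in
/-- In `D₈ = DihedralGroup 4`, with `a = sr 0`, `b = sr 1` and `B = {a, b}`, the word
`a·b·a` is geodesic, so `Geo(D₈, B)` is not piecewise excluding. -/
theorem dihedral_two_gens_not_piecewise_excluding :
    IsSymmGen ({DihedralGroup.sr 0, DihedralGroup.sr 1} : Finset (DihedralGroup 4)) ∧
    IsGeodesic ({DihedralGroup.sr 0, DihedralGroup.sr 1} : Finset (DihedralGroup 4))
      [DihedralGroup.sr 0, DihedralGroup.sr 1, DihedralGroup.sr 0] ∧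
    ¬ PiecewiseExcluding
        ({DihedralGroup.sr 0, DihedralGroup.sr 1} : Finset (DihedralGroup 4))
        (Geo ({DihedralGroup.sr 0, DihedralGroup.sr 1} : Finset (DihedralGroup 4))) := by
  refine ⟨⟨?_, by decide⟩, aux_geo, ?_⟩
  · rw [eq_top_iff]
    rintro x -
    have ha : sr (0 : ZMod 4) ∈ Subgroup.closure ({sr 0, sr 1} : Set (DihedralGroup 4)) :=
      Subgroup.subset_closure (by simp)
    have hb : sr (1 : ZMod 4) ∈ Subgroup.closure ({sr 0, sr 1} : Set (DihedralGroup 4)) :=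
      Subgroup.subset_closure (by simp)
    have hr1 : r (1 : ZMod 4) ∈ Subgroup.closure ({sr 0, sr 1} : Set (DihedralGroup 4)) := by
      have := mul_mem ha hb
      simpa [DihedralGroup.sr_mul_sr] using this
    have hr : ∀ i : ZMod 4, r i ∈ Subgroup.closure ({sr 0, sr 1} : Set (DihedralGroup 4)) := by
      intro i
      have := pow_mem hr1 i.val
      rwa [DihedralGroup.r_one_pow, ZMod.natCast_val, ZMod.cast_id] at this
    cases x with
    | r i => simpa using hr i
    | sr i =>
      have := mul_mem ha (hr i)
      simpa [DihedralGroup.sr_mul_r] using this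
  · rintro ⟨F, hF, hiff⟩
    have h1 := (hiff [sr 0, sr 1, sr 0] (by intro x hx; fin_cases hx <;> decide)).mp aux_geo
    have h2 : [sr (0 : ZMod 4), sr 0] ∈ Geo ({sr 0, sr 1} : Finset (DihedralGroup 4)) := by
      refine (hiff [sr 0, sr 0] (by intro x hx; fin_cases hx <;> decide)).mpr ?_
      intro u hu hsub
      exact h1 u hu (hsub.trans (by decide))
    have := h2.2 [] (by intro x hx; simp at hx) (by decide)
    simp at this
end

section
/- In the symmetric group S₃ on three letters (Equiv.Perm (Fin 3)), let x = swap 0 1 and y = swap 1 2, and let A = {x, y}, a finite symmetric generating set (x and y are involutions). Then the three-letter word x·y·x is geodesic over A, and consequently the geodesic language Geo(S₃, A) is not piecewise excluding. -/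
section Aux

local notation "x3" => (Equiv.swap 0 1 : Equiv.Perm (Fin 3))
local notation "y3" => (Equiv.swap 1 2 : Equiv.Perm (Fin 3))
local notation "A3" => ({Equiv.swap 0 1, Equiv.swap 1 2} : Finset (Equiv.Perm (Fin 3)))

private lemma mem_A3 {a : Equiv.Perm (Fin 3)} (h : a ∈ A3) : a = x3 ∨ a = y3 := by
  simpa [Finset.mem_insert, Finset.mem_singleton] using h

private lemma symmgen_A3 : IsSymmGen A3 := by
  constructor
  · rw [eq_top_iff]
    intro g _
    have hx : x3 ∈ Subgroup.closure (A3 : Set (Equiv.Perm (Fin 3))) :=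
      Subgroup.subset_closure (by simp)
    have hy : y3 ∈ Subgroup.closure (A3 : Set (Equiv.Perm (Fin 3))) :=
      Subgroup.subset_closure (by simp)
    have key : ∀ g : Equiv.Perm (Fin 3),
        g = 1 ∨ g = x3 ∨ g = y3 ∨ g = x3*y3 ∨ g = y3*x3 ∨ g = x3*y3*x3 := by decide
    rcases key g with h | h | h | h | h | h <;> subst h
    · exact Subgroup.one_mem _
    · exact hx
    · exact hy
    · exact Subgroup.mul_mem _ hx hy
    · exact Subgroup.mul_mem _ hy hx
    · exact Subgroup.mul_mem _ (Subgroup.mul_mem _ hx hy) hx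
  · intro a ha
    rcases mem_A3 ha with h | h <;> subst h
    · simp
    · simp

private lemma geo_xyx : IsGeodesic A3 [x3, y3, x3] := by
  constructor
  · intro a ha
    simp only [List.mem_cons, List.not_mem_nil, or_false] at ha
    rcases ha with h | h | h <;> subst h <;> simp
  · intro v hv hprod
    rcases v with _ | ⟨a, _ | ⟨b, _ | ⟨c, t⟩⟩⟩
    · exfalso
      simp only [List.prod_nil, List.prod_cons] at hprod
      exact absurd hprod (by decide)
    · exfalso
      have ha := mem_A3 (hv a (by simp))
      simp only [List.prod_cons, List.prod_nil, mul_one] at hprod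
      rcases ha with h | h <;> subst h <;> exact absurd hprod (by decide)
    · exfalso
      have ha := mem_A3 (hv a (by simp))
      have hb := mem_A3 (hv b (by simp))
      simp only [List.prod_cons, List.prod_nil, mul_one] at hprod
      rcases ha with h | h <;> rcases hb with h' | h' <;> subst h <;> subst h' <;>
        exact absurd hprod (by decide)
    · simp only [List.length_cons, List.length_nil]
      omega

private lemma not_geo_xx : ¬ IsGeodesic A3 [x3, x3] := by
  rintro ⟨-, hmin⟩
  have := hmin [] (by intro a ha; simp at ha) (by decide)
  simp at this

end Aux

/-- In `S₃ = Equiv.Perm (Fin 3)`, with `x = swap 0 1`, `y = swap 1 2` and `A = {x, y}`,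
the word `x·y·x` is geodesic, so `Geo(S₃, A)` is not piecewise excluding. -/
theorem symm3_not_piecewise_excluding :
    IsSymmGen ({Equiv.swap 0 1, Equiv.swap 1 2} : Finset (Equiv.Perm (Fin 3))) ∧
    IsGeodesic ({Equiv.swap 0 1, Equiv.swap 1 2} : Finset (Equiv.Perm (Fin 3)))
      [Equiv.swap 0 1, Equiv.swap 1 2, Equiv.swap 0 1] ∧
    ¬ PiecewiseExcluding
        ({Equiv.swap 0 1, Equiv.swap 1 2} : Finset (Equiv.Perm (Fin 3)))
        (Geo ({Equiv.swap 0 1, Equiv.swap 1 2} : Finset (Equiv.Perm (Fin 3)))) := by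
  refine ⟨symmgen_A3, geo_xyx, ?_⟩
  rintro ⟨F, -, hF⟩
  set x := (Equiv.swap 0 1 : Equiv.Perm (Fin 3))
  set y := (Equiv.swap 1 2 : Equiv.Perm (Fin 3))
  have hxx_word : IsWordOver ({x, y} : Finset (Equiv.Perm (Fin 3))) [x, x] := by
    intro a ha
    simp only [List.mem_cons, List.not_mem_nil, or_false] at ha
    rcases ha with h | h <;> subst h <;> simp
  have hxyx_word : IsWordOver ({x, y} : Finset (Equiv.Perm (Fin 3))) [x, y, x] :=
    geo_xyx.1
  -- [x,x] is not geodesic, so some u ∈ F is a sublist of [x,x]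
  have h1 : ¬ (∀ u ∈ F, ¬ List.Sublist u [x, x]) := by
    intro h
    exact not_geo_xx ((hF [x, x] hxx_word).mpr h)
  push_neg at h1
  obtain ⟨u, huF, hu⟩ := h1
  -- [x,y,x] is geodesic, so no u ∈ F is a sublist of [x,y,x]
  have h2 : ∀ u ∈ F, ¬ List.Sublist u [x, y, x] :=
    (hF [x, y, x] hxyx_word).mp geo_xyx
  -- but [x,x] is a sublist of [x,y,x]
  have hsub : List.Sublist [x, x] [x, y, x] := by
    refine List.Sublist.cons₂ _ ?_
    exact List.Sublist.cons _ (List.Sublist.refl _)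
  exact h2 u huF (hu.trans hsub)
end

section
/- Let G = BS(1,2) be the presented group on generators a, t with the single relator t a t⁻¹ a⁻², and let A = {a, a⁻¹, t, t⁻¹}, a finite symmetric generating set of G. Then the three-letter word t⁻¹·a·t is geodesic over A, and consequently the geodesic language Geo(G, A) is not piecewise excluding. -/
/-- The Baumslag–Solitar group `BS(1,2)`. -/
abbrev BS12 : Type := PresentedGroup bs12Rels

noncomputable instance : DecidableEq BS12 := Classical.decEq _

/-- The generating set `A = {a, a⁻¹, t, t⁻¹}` of `BS(1,2)`. -/
noncomputable def bs12GenSet : Finset BS12 :=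
  {PresentedGroup.of 0, (PresentedGroup.of 0)⁻¹,
   PresentedGroup.of 1, (PresentedGroup.of 1)⁻¹}

section bsAux

/-- `a ↦ (x ↦ x + 1)` as a permutation of `ℚ`. -/
def bsA : Equiv.Perm ℚ := ⟨fun x => x + 1, fun x => x - 1, fun x => by ring, fun x => by ring⟩
/-- `t ↦ (x ↦ 2x)` as a permutation of `ℚ`. -/
def bsT : Equiv.Perm ℚ := ⟨fun x => 2 * x, fun x => x / 2, fun x => by ring, fun x => by ring⟩

lemma bsA_apply (x : ℚ) : bsA x = x + 1 := rfl
lemma bsA_inv_apply (x : ℚ) : bsA⁻¹ x = x - 1 := rfl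
lemma bsT_apply (x : ℚ) : bsT x = 2 * x := rfl
lemma bsT_inv_apply (x : ℚ) : bsT⁻¹ x = x / 2 := rfl

lemma bs_rel : ∀ r ∈ bs12Rels,
    FreeGroup.lift (fun i : Fin 2 => if i = 0 then bsA else bsT) r = 1 := by
  intro r hr
  simp only [bs12Rels, Set.mem_singleton_iff] at hr
  subst hr
  simp only [map_mul, map_inv, map_pow, FreeGroup.lift_apply_of]
  norm_num
  ext x
  simp [Equiv.Perm.mul_apply, bsA_apply, bsA_inv_apply, bsT_apply, bsT_inv_apply, pow_two]
  ring

noncomputable def bsphi : BS12 →* Equiv.Perm ℚ := PresentedGroup.toGroup bs_rel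

lemma bsphi_a : bsphi (PresentedGroup.of 0) = bsA := by
  simp [bsphi, PresentedGroup.toGroup.of]

lemma bsphi_t : bsphi (PresentedGroup.of 1) = bsT := by
  simp [bsphi, PresentedGroup.toGroup.of]

end bsAux

/-- In `BS(1,2)` with `A = {a, a⁻¹, t, t⁻¹}`, the word `t⁻¹·a·t` is geodesic, so
`Geo(BS(1,2), A)` is not piecewise excluding. -/


theorem bs12_not_piecewise_excluding :
    IsSymmGen bs12GenSet ∧
    IsGeodesic bs12GenSet
      [(PresentedGroup.of 1 : BS12)⁻¹, PresentedGroup.of 0, PresentedGroup.of 1] ∧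
    ¬ PiecewiseExcluding bs12GenSet (Geo bs12GenSet) := by
  have hA : (PresentedGroup.of 0 : BS12) ∈ bs12GenSet := by simp [bs12GenSet]
  have hAi : (PresentedGroup.of 0 : BS12)⁻¹ ∈ bs12GenSet := by
    simp [bs12GenSet]
  have hT : (PresentedGroup.of 1 : BS12) ∈ bs12GenSet := by simp [bs12GenSet]
  have hTi : (PresentedGroup.of 1 : BS12)⁻¹ ∈ bs12GenSet := by
    simp [bs12GenSet]
  have hsymm : IsSymmGen bs12GenSet := by
    constructor
    · rw [eq_top_iff, ← PresentedGroup.closure_range_of bs12Rels]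
      apply Subgroup.closure_mono
      rintro x ⟨i, rfl⟩
      fin_cases i
      · exact hA
      · exact hT
    · intro a ha
      simp only [bs12GenSet, Finset.mem_insert, Finset.mem_singleton] at ha
      rcases ha with rfl | rfl | rfl | rfl <;>
        simp [bs12GenSet]
  have hgeo : IsGeodesic bs12GenSet
      [(PresentedGroup.of 1 : BS12)⁻¹, PresentedGroup.of 0, PresentedGroup.of 1] := by
    constructor
    · intro x hx
      simp only [List.mem_cons, List.not_mem_nil, or_false] at hx
      rcases hx with rfl | rfl | rfl
      · exact hTi
      · exact hA
      · exact hT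
    · intro v hv hprod
      by_contra hlen
      push_neg at hlen
      have key : bsphi v.prod 3 = (7 : ℚ) / 2 := by
        rw [hprod]
        simp [List.prod_cons, map_mul, map_inv, bsphi_a, bsphi_t,
          Equiv.Perm.mul_apply, bsA_apply, bsA_inv_apply, bsT_apply, bsT_inv_apply]
        norm_num
      match v, hlen with
      | [], _ =>
        simp [map_one] at key
        norm_num at key
      | [x], _ =>
        have hx := hv x (by simp)
        simp only [bs12GenSet, Finset.mem_insert, Finset.mem_singleton] at hx
        rcases hx with rfl | rfl | rfl | rfl <;>
          simp only [List.prod_cons, List.prod_nil, mul_one, map_mul, map_inv,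
            bsphi_a, bsphi_t, Equiv.Perm.mul_apply, bsA_apply, bsA_inv_apply,
            bsT_apply, bsT_inv_apply] at key <;> norm_num at key
      | [x, y], _ =>
        have hx := hv x (by simp)
        have hy := hv y (by simp)
        simp only [bs12GenSet, Finset.mem_insert, Finset.mem_singleton] at hx hy
        rcases hx with rfl | rfl | rfl | rfl <;> rcases hy with rfl | rfl | rfl | rfl <;>
          simp only [List.prod_cons, List.prod_nil, mul_one, map_mul, map_inv,
            bsphi_a, bsphi_t, Equiv.Perm.mul_apply, bsA_apply, bsA_inv_apply,
            bsT_apply, bsT_inv_apply] at key <;> norm_num at key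
      | x :: y :: z :: rest, hlen => simp at hlen; omega
  refine ⟨hsymm, hgeo, ?_⟩
  rintro ⟨F, hF, hchar⟩
  set w : List BS12 :=
    [(PresentedGroup.of 1 : BS12)⁻¹, PresentedGroup.of 0, PresentedGroup.of 1] with hw
  have hwover : IsWordOver bs12GenSet w := hgeo.1
  have hwmem : w ∈ Geo bs12GenSet := hgeo
  have hz : IsWordOver bs12GenSet [(PresentedGroup.of 1 : BS12)⁻¹, PresentedGroup.of 1] := by
    intro x hx
    simp only [List.mem_cons, List.not_mem_nil, or_false] at hx
    rcases hx with rfl | rfl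
    · exact hTi
    · exact hT
  have hznot : [(PresentedGroup.of 1 : BS12)⁻¹, PresentedGroup.of 1] ∉ Geo bs12GenSet := by
    intro hg
    have := hg.2 [] (by intro x hx; simp at hx) (by simp)
    simp at this
  have hzsub : List.Sublist [(PresentedGroup.of 1 : BS12)⁻¹, PresentedGroup.of 1] w := by
    rw [hw]
    exact List.Sublist.cons₂ _ (List.sublist_cons_self _ _)
  have hex : ¬ ∀ u ∈ F, ¬ List.Sublist u
      [(PresentedGroup.of 1 : BS12)⁻¹, PresentedGroup.of 1] := by
    intro hall
    exact hznot ((hchar _ hz).mpr hall)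
  push_neg at hex
  obtain ⟨u, huF, husub⟩ := hex
  exact ((hchar w hwover).mp hwmem) u huF (husub.trans hzsub)
end
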